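/- Let G be a group, A an additive commutative group with a distributive G-action, T a set with a G-action, and f : T × T → A a function satisfying the chain rule and G-equivariance. Fix t₀ ∈ T, set ψ(t) = f(t, t₀) and α(σ) = f(σ·t₀, t₀), and for a finite multiset s over T define Ψ(s) = Σ_{t ∈ s} ψ(t) (the sum of ψ over s, with multiplicity). Then for every multiset s of cardinality d and every σ ∈ G: Ψ(map of s under t ↦ σ·t) = d • α(σ) + σ·Ψ(s). In particular, the map on d-tuples (t₁,…,t_d) ↦ Σ_i ψ(t_i) is invariant under permutations of the entries and hence factors through the d-th symmetric power Sym^d(T), and the induced map is equivariant for the action twisted by the cocycle d•α. (This is the skeleton of Proposition 2.6(b) and Corollary 2.7: ψ_{Z^{⊞d}} factors through Sym^{(d)}(T), generalizing the Abel map Sym^{(d)}C → Pic^d_{C/K}.) -/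
import Mathlib


/-- The skeleton of Proposition 2.6(b) and Corollary 2.7: with
`ψ(t) = f(t, t₀)`, `α(σ) = f(σ·t₀, t₀)`, and `Ψ(s) = ∑_{t ∈ s} ψ(t)` for a
finite multiset `s` over `T`, one has `Ψ(σ·s) = d • α(σ) + σ·Ψ(s)` for every
multiset `s` of cardinality `d`; moreover the map on `d`-tuples
`(t₁,…,t_d) ↦ ∑ i, ψ(tᵢ)` is invariant under permutations of the entries, so
it factors through `Sym^d(T)` and is equivariant for the action twisted by the
cocycle `d • α`. -/
theorem sym_power_twisted_equivariance {G A T : Type*} [Group G] [AddCommGroup A]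
    [DistribMulAction G A] [MulAction G T] (f : T → T → A)
    (hchain : ∀ t₁ t₂ t₃ : T, f t₁ t₂ + f t₂ t₃ = f t₁ t₃)
    (hequiv : ∀ (σ : G) (t₁ t₂ : T), f (σ • t₁) (σ • t₂) = σ • f t₁ t₂)
    (t₀ : T) (d : ℕ) :
    (∀ (s : Multiset T), Multiset.card s = d → ∀ σ : G,
        ((s.map (fun t => σ • t)).map (fun t => f t t₀)).sum
          = d • f (σ • t₀) t₀ + σ • (s.map (fun t => f t t₀)).sum) ∧
    (∀ (u : Fin d → T) (e : Equiv.Perm (Fin d)),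
        ∑ i, f (u (e i)) t₀ = ∑ i, f (u i) t₀) := by
  constructor
  · intro s hs σ
    subst hs
    induction s using Multiset.induction with
    | empty => simp
    | cons a s ih =>
      have key : f (σ • a) t₀ = σ • f a t₀ + f (σ • t₀) t₀ := by
        rw [← hchain (σ • a) (σ • t₀) t₀, hequiv]
      simp only [Multiset.map_cons, Multiset.sum_cons, Multiset.card_cons, ih,
        succ_nsmul, key, smul_add]
      abel
  · intro u e
    exact Equiv.sum_comp e (fun i => f (u i) t₀)
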